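/- Let g : (0,1] → ℝ be four times continuously differentiable with g(s) ≥ 0, g'(s) ≥ 0, g''(s) ≥ 0, g'''(s) ≥ 0 and g''''(s) ≥ 0 for all s ∈ (0,1]. For x ≥ 1 define F(x) = x⁻³·g(1/x) − x⁻¹·∫₀^{1/x} s·g(s) ds. Then F is four times differentiable on (1,∞), F(x) ≥ 0 for all x ≥ 1, and (−1)ⁿ·F⁽ⁿ⁾(x) ≥ 0 for n = 1, 2, 3, 4 and all x > 1. -/

import Mathlib

/-!
Write `F x = x⁻¹ * H x⁻¹` with `H u = u² g u - ∫₀ᵘ s g s ds`. Since `s g s ≤ u g u` on `[0, u]`,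
`H ≥ 0`; and `H' = u g + u² g'`, so for `j ≥ 1`,
`H⁽ʲ⁾ = u² g⁽ʲ⁾ + (2j - 1) u g⁽ʲ⁻¹⁾ + (j - 1)² g⁽ʲ⁻²⁾ ≥ 0`.
As `x ↦ x⁻ᵏ φ x⁻¹` has derivative `-(k x⁻ᵏ⁻¹ φ x⁻¹ + x⁻ᵏ⁻² φ' x⁻¹)`, the `n`-th derivative of
`x ↦ x⁻¹ H x⁻¹` is `(-1)ⁿ` times a nonnegative combination of the terms `x⁻ᵏ H⁽ʲ⁾ x⁻¹`, `j ≤ n`.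
-/

open Set Filter

theorem ContDiffOn.hasDerivAt_iteratedDeriv {𝕜 E : Type*} [NontriviallyNormedField 𝕜]
    [NormedAddCommGroup E] [NormedSpace 𝕜 E] {f : 𝕜 → E} {s : Set 𝕜} {n : WithTop ℕ∞}
    {j : ℕ} {x : 𝕜} (hf : ContDiffOn 𝕜 n f s) (hs : IsOpen s) (hj : (j : WithTop ℕ∞) < n)
    (hx : x ∈ s) : HasDerivAt (iteratedDeriv j f) (iteratedDeriv (j + 1) f x) x := by
  have hdiff : DifferentiableOn 𝕜 (iteratedDeriv j f) s :=
    (hf.differentiableOn_iteratedDerivWithin hj hs.uniqueDiffOn).congr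
      fun y hy => (iteratedDerivWithin_of_isOpen hs hy).symm
  rw [iteratedDeriv_succ]
  exact (hdiff.differentiableAt (hs.mem_nhds hx)).hasDerivAt

section IntegralOfMonotone

variable {g : ℝ → ℝ} {b u : ℝ}

theorem id_mul_nonneg (hg₀ : ∀ s ∈ Ioc 0 b, 0 ≤ g s) {s : ℝ} (hs : s ∈ Icc 0 b) :
    0 ≤ s * g s := by
  rcases hs.1.eq_or_lt with rfl | hs₀
  · simp
  · exact mul_nonneg hs₀.le (hg₀ s ⟨hs₀, hs.2⟩)

theorem monotoneOn_id_mul (hg₀ : ∀ s ∈ Ioc 0 b, 0 ≤ g s)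
    (hg : MonotoneOn g (Ioc 0 b)) : MonotoneOn (fun s => s * g s) (Icc 0 b) := by
  intro s hs t ht hst
  rcases hs.1.eq_or_lt with rfl | hs₀
  · simpa using id_mul_nonneg hg₀ ht
  · exact mul_le_mul hst (hg ⟨hs₀, hs.2⟩ ⟨hs₀.trans_le hst, ht.2⟩ hst) (hg₀ s ⟨hs₀, hs.2⟩)
      (hs₀.le.trans hst)

theorem intervalIntegrable_id_mul (hg₀ : ∀ s ∈ Ioc 0 b, 0 ≤ g s)
    (hg : MonotoneOn g (Ioc 0 b)) (hu : u ∈ Icc 0 b) :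
    IntervalIntegrable (fun s => s * g s) MeasureTheory.volume 0 u :=
  ((monotoneOn_id_mul hg₀ hg).mono (by
    rw [uIcc_of_le hu.1]; exact Icc_subset_Icc_right hu.2)).intervalIntegrable

theorem integral_id_mul_le (hg₀ : ∀ s ∈ Ioc 0 b, 0 ≤ g s)
    (hg : MonotoneOn g (Ioc 0 b)) (hu : u ∈ Icc 0 b) :
    ∫ s in (0:ℝ)..u, s * g s ≤ u ^ 2 * g u := by
  calc ∫ s in (0:ℝ)..u, s * g s ≤ ∫ _ in (0:ℝ)..u, u * g u :=
        intervalIntegral.integral_mono_on hu.1 (intervalIntegrable_id_mul hg₀ hg hu)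
          intervalIntegrable_const fun s hs =>
            monotoneOn_id_mul hg₀ hg ⟨hs.1, hs.2.trans hu.2⟩ hu hs.2
    _ = u ^ 2 * g u := by simp only [intervalIntegral.integral_const, smul_eq_mul]; ring

theorem hasDerivAt_integral_id_mul (hg₀ : ∀ s ∈ Ioc 0 b, 0 ≤ g s)
    (hg : MonotoneOn g (Ioc 0 b)) (hgc : ContinuousOn g (Ioo 0 b)) (hu : u ∈ Ioo 0 b) :
    HasDerivAt (fun v => ∫ s in (0:ℝ)..v, s * g s) (u * g u) u :=
  have hc : ContinuousOn (fun s => s * g s) (Ioo 0 b) := continuousOn_id.mul hgc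
  intervalIntegral.integral_hasDerivAt_right
    (intervalIntegrable_id_mul hg₀ hg (Ioo_subset_Icc_self hu))
    (hc.stronglyMeasurableAtFilter isOpen_Ioo u hu) (hc.continuousAt (isOpen_Ioo.mem_nhds hu))

end IntegralOfMonotone

/-- The `j`-th derivative of `H u = u² g u - ∫₀ᵘ s g s ds`. For `j = 0` the last summand of the
second clause has coefficient `0`, so the truncated index `0 - 1 = 0` is harmless. -/
noncomputable def reflProfileDeriv (g : ℝ → ℝ) : ℕ → ℝ → ℝ
  | 0, u => u ^ 2 * g u - ∫ s in (0:ℝ)..u, s * g s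
  | j + 1, u => u ^ 2 * iteratedDeriv (j + 1) g u + (2 * j + 1) * u * iteratedDeriv j g u
      + j ^ 2 * iteratedDeriv (j - 1) g u

section ReflProfile

variable {g : ℝ → ℝ} {b u : ℝ}

theorem reflProfileDeriv_zero_nonneg (hg₀ : ∀ s ∈ Ioc 0 b, 0 ≤ g s)
    (hg : MonotoneOn g (Ioc 0 b)) (hu : u ∈ Ioc 0 b) : 0 ≤ reflProfileDeriv g 0 u :=
  sub_nonneg.2 (integral_id_mul_le hg₀ hg (Ioc_subset_Icc_self hu))

theorem reflProfileDeriv_succ_nonneg {j : ℕ} (hu : 0 ≤ u)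
    (hD : ∀ i ≤ j + 1, 0 ≤ iteratedDeriv i g u) : 0 ≤ reflProfileDeriv g (j + 1) u := by
  have := hD (j + 1) le_rfl
  have := hD j (by omega)
  have := hD (j - 1) (by omega)
  simp only [reflProfileDeriv]
  positivity

theorem hasDerivAt_reflProfileDeriv_zero (hg₀ : ∀ s ∈ Ioc 0 b, 0 ≤ g s)
    (hg : MonotoneOn g (Ioc 0 b)) (hgc : ContinuousOn g (Ioo 0 b)) (hu : u ∈ Ioo 0 b)
    (hg' : HasDerivAt g (iteratedDeriv 1 g u) u) :
    HasDerivAt (reflProfileDeriv g 0) (reflProfileDeriv g 1 u) u := by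
  refine (((hasDerivAt_pow 2 u).mul hg').sub
    (hasDerivAt_integral_id_mul hg₀ hg hgc hu)).congr_deriv ?_
  simp only [reflProfileDeriv, iteratedDeriv_zero]
  push_cast
  ring

theorem hasDerivAt_reflProfileDeriv_succ {j : ℕ}
    (hD : ∀ i ≤ j + 1, HasDerivAt (iteratedDeriv i g) (iteratedDeriv (i + 1) g u) u) :
    HasDerivAt (reflProfileDeriv g (j + 1)) (reflProfileDeriv g (j + 2) u) u := by
  have hlast : HasDerivAt (fun u => (j : ℝ) ^ 2 * iteratedDeriv (j - 1) g u)
      ((j : ℝ) ^ 2 * iteratedDeriv j g u) u := by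
    rcases j with _ | i
    · simpa using hasDerivAt_const u (0 : ℝ)
    · simpa using (hD i (by omega)).const_mul ((i + 1 : ℝ) ^ 2)
  refine ((((hasDerivAt_pow 2 u).mul (hD (j + 1) le_rfl)).add
    (((hasDerivAt_id u).const_mul (2 * j + 1 : ℝ)).mul (hD j (by omega)))).add
      hlast).congr_deriv ?_
  simp only [reflProfileDeriv, id, Nat.add_sub_cancel]
  push_cast
  ring

theorem hasDerivAt_reflProfileDeriv {j : ℕ} (hg₀ : ∀ s ∈ Ioc 0 b, 0 ≤ g s)
    (hg : MonotoneOn g (Ioc 0 b)) (hgc : ContinuousOn g (Ioo 0 b)) (hu : u ∈ Ioo 0 b)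
    (hD : ∀ i ≤ j, HasDerivAt (iteratedDeriv i g) (iteratedDeriv (i + 1) g u) u) :
    HasDerivAt (reflProfileDeriv g j) (reflProfileDeriv g (j + 1) u) u := by
  rcases j with _ | j
  · exact hasDerivAt_reflProfileDeriv_zero hg₀ hg hgc hu (by simpa using hD 0 le_rfl)
  · exact hasDerivAt_reflProfileDeriv_succ hD

theorem reflProfileDeriv_nonneg {j : ℕ} (hg₀ : ∀ s ∈ Ioc 0 b, 0 ≤ g s)
    (hg : MonotoneOn g (Ioc 0 b)) (hu : u ∈ Ioc 0 b) (hD : ∀ i ≤ j, 0 ≤ iteratedDeriv i g u) :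
    0 ≤ reflProfileDeriv g j u := by
  rcases j with _ | j
  · exact reflProfileDeriv_zero_nonneg hg₀ hg hu
  · exact reflProfileDeriv_succ_nonneg hu.1.le hD

end ReflProfile

theorem hasDerivAt_inv_pow_mul_comp_inv {φ : ℝ → ℝ} {φ' x : ℝ} (k : ℕ) (hx : x ≠ 0)
    (hφ : HasDerivAt φ φ' x⁻¹) :
    HasDerivAt (fun y => y⁻¹ ^ k * φ y⁻¹)
      (-(k * x⁻¹ ^ (k + 1) * φ x⁻¹ + x⁻¹ ^ (k + 2) * φ')) x := by
  have hinv : HasDerivAt (fun y : ℝ => y⁻¹) (-(x ^ 2)⁻¹) x := hasDerivAt_inv hx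
  refine ((hinv.pow k).mul (hφ.comp x hinv)).congr_deriv ?_
  simp only [Function.comp_apply, Pi.pow_apply, ← inv_pow]
  rcases k with _ | k
  · simp only [Nat.cast_zero, pow_zero]
    ring
  · rw [Nat.add_sub_cancel]
    push_cast
    ring

inductive IsInvPowComb (φ : ℕ → ℝ → ℝ) (n : ℕ) : (ℝ → ℝ) → Prop
  | term {c : ℝ} {j : ℕ} (k : ℕ) (hc : 0 ≤ c) (hj : j ≤ n) :
      IsInvPowComb φ n fun x => c * (x⁻¹ ^ k * φ j x⁻¹)
  | add {f₁ f₂ : ℝ → ℝ} :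
      IsInvPowComb φ n f₁ → IsInvPowComb φ n f₂ → IsInvPowComb φ n (f₁ + f₂)

namespace IsInvPowComb

variable {φ : ℕ → ℝ → ℝ} {n : ℕ} {f : ℝ → ℝ}

theorem nonneg (hf : IsInvPowComb φ n f) {x : ℝ} (hx : 0 ≤ x)
    (hφ : ∀ j ≤ n, 0 ≤ φ j x⁻¹) : 0 ≤ f x := by
  induction hf with
  | term k hc hj => have := hφ _ hj; positivity
  | add _ _ ih₁ ih₂ => exact add_nonneg ih₁ ih₂

theorem exists_hasDerivAt (hf : IsInvPowComb φ n f) :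
    ∃ f', IsInvPowComb φ (n + 1) f' ∧ ∀ x ≠ 0,
      (∀ j ≤ n, HasDerivAt (φ j) (φ (j + 1) x⁻¹) x⁻¹) → HasDerivAt f (-f' x) x := by
  induction hf with
  | @term c j k hc hj =>
    refine ⟨_, .add (.term (j := j) (k + 1) (mul_nonneg hc k.cast_nonneg) (by omega))
      (.term (j := j + 1) (k + 2) hc (by omega)), fun x hx hφ => ?_⟩
    refine ((hasDerivAt_inv_pow_mul_comp_inv k hx (hφ j hj)).const_mul c).congr_deriv ?_
    simp only [Pi.add_apply]
    ring
  | add _ _ ih₁ ih₂ =>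
    obtain ⟨f₁', hf₁', hd₁⟩ := ih₁
    obtain ⟨f₂', hf₂', hd₂⟩ := ih₂
    refine ⟨f₁' + f₂', hf₁'.add hf₂', fun x hx hφ => ?_⟩
    exact ((hd₁ x hx hφ).add (hd₂ x hx hφ)).congr_deriv (neg_add _ _).symm

end IsInvPowComb

section InvMulCompInv

variable {φ : ℕ → ℝ → ℝ} {N : ℕ} {U : Set ℝ} {ψ : ℝ → ℝ}

theorem exists_iteratedDeriv_eqOn_isInvPowComb (hU : IsOpen U) (hU₀ : U ⊆ Ioi 0)
    (hψ : EqOn ψ (fun x => x⁻¹ * φ 0 x⁻¹) U)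
    (hφ : ∀ j < N, ∀ x ∈ U, HasDerivAt (φ j) (φ (j + 1) x⁻¹) x⁻¹) {n : ℕ} (hn : n ≤ N) :
    ∃ f, IsInvPowComb φ n f ∧ EqOn (iteratedDeriv n ψ) (fun x => (-1) ^ n * f x) U := by
  induction n with
  | zero => exact ⟨_, .term (c := 1) (j := 0) 1 zero_le_one le_rfl, fun x hx => by simp [hψ hx]⟩
  | succ n ih =>
    obtain ⟨f, hf, hψf⟩ := ih (by omega)
    obtain ⟨f', hf', hd⟩ := hf.exists_hasDerivAt
    refine ⟨f', hf', fun x hx => ?_⟩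
    have hd' := (hd x (hU₀ hx).ne' fun j hj => hφ j (by omega) x hx).const_mul ((-1 : ℝ) ^ n)
    rw [iteratedDeriv_succ, (eventuallyEq_of_mem (hU.mem_nhds hx) hψf).deriv_eq, hd'.deriv]
    ring

theorem differentiableAt_iteratedDeriv_inv_mul_comp_inv (hU : IsOpen U) (hU₀ : U ⊆ Ioi 0)
    (hψ : EqOn ψ (fun x => x⁻¹ * φ 0 x⁻¹) U)
    (hφ : ∀ j < N, ∀ x ∈ U, HasDerivAt (φ j) (φ (j + 1) x⁻¹) x⁻¹) {n : ℕ} (hn : n < N)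
    {x : ℝ} (hx : x ∈ U) : DifferentiableAt ℝ (iteratedDeriv n ψ) x := by
  obtain ⟨f, hf, hψf⟩ := exists_iteratedDeriv_eqOn_isInvPowComb hU hU₀ hψ hφ hn.le
  obtain ⟨f', -, hd⟩ := hf.exists_hasDerivAt
  have hd' := (hd x (hU₀ hx).ne' fun j hj => hφ j (by omega) x hx).const_mul ((-1 : ℝ) ^ n)
  exact hd'.differentiableAt.congr_of_eventuallyEq (eventuallyEq_of_mem (hU.mem_nhds hx) hψf)

theorem neg_one_pow_mul_iteratedDeriv_inv_mul_comp_inv_nonneg (hU : IsOpen U)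
    (hU₀ : U ⊆ Ioi 0) (hψ : EqOn ψ (fun x => x⁻¹ * φ 0 x⁻¹) U)
    (hφ : ∀ j < N, ∀ x ∈ U, HasDerivAt (φ j) (φ (j + 1) x⁻¹) x⁻¹)
    (hφ₀ : ∀ j ≤ N, ∀ x ∈ U, 0 ≤ φ j x⁻¹) {n : ℕ} (hn : n ≤ N) {x : ℝ} (hx : x ∈ U) :
    0 ≤ (-1) ^ n * iteratedDeriv n ψ x := by
  obtain ⟨f, hf, hψf⟩ := exists_iteratedDeriv_eqOn_isInvPowComb hU hU₀ hψ hφ hn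
  rw [hψf hx, ← mul_assoc, ← mul_pow, neg_one_mul, neg_neg, one_pow, one_mul]
  exact hf.nonneg (hU₀ hx).le fun j hj => hφ₀ j (by omega) x hx

end InvMulCompInv

theorem reflection_y_deriv_alternating (g : ℝ → ℝ)
    (hg : ContDiffOn ℝ 4 g (Set.Ioc (0:ℝ) 1))
    (hgn : ∀ n : ℕ, n ≤ 4 → ∀ s ∈ Set.Ioc (0:ℝ) 1,
      0 ≤ iteratedDerivWithin n g (Set.Ioc (0:ℝ) 1) s)
    (F : ℝ → ℝ)
    (hF : ∀ x : ℝ, 1 ≤ x →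
      F x = x⁻¹ ^ 3 * g x⁻¹ - x⁻¹ * ∫ s in (0:ℝ)..x⁻¹, s * g s) :
    (∀ n : ℕ, n < 4 → ∀ x : ℝ, 1 < x → DifferentiableAt ℝ (iteratedDeriv n F) x) ∧
    (∀ x : ℝ, 1 ≤ x → 0 ≤ F x) ∧
    (∀ n : ℕ, 1 ≤ n → n ≤ 4 → ∀ x : ℝ, 1 < x →
      0 ≤ (-1 : ℝ) ^ n * iteratedDeriv n F x) := by
  have hgD : ∀ j < 4, ∀ u ∈ Ioo (0:ℝ) 1,
      HasDerivAt (iteratedDeriv j g) (iteratedDeriv (j + 1) g u) u := fun j hj u hu =>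
    (hg.mono Ioo_subset_Ioc_self).hasDerivAt_iteratedDeriv isOpen_Ioo (by exact_mod_cast hj) hu
  have hgD₀ : ∀ j ≤ 4, ∀ u ∈ Ioo (0:ℝ) 1, 0 ≤ iteratedDeriv j g u := fun j hj u hu =>
    iteratedDerivWithin_eq_iteratedDeriv (uniqueDiffOn_Ioc 0 1)
      ((hg.contDiffAt (Ioc_mem_nhds hu.1 hu.2)).of_le (by exact_mod_cast hj))
      (Ioo_subset_Ioc_self hu) ▸ hgn j hj u (Ioo_subset_Ioc_self hu)
  have hg₀ : ∀ u ∈ Ioc (0:ℝ) 1, 0 ≤ g u := by simpa using hgn 0 (by norm_num)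
  have hmono : MonotoneOn g (Ioc 0 1) := by
    refine monotoneOn_of_hasDerivWithinAt_nonneg (f' := iteratedDeriv 1 g) (convex_Ioc 0 1)
      hg.continuousOn (fun u hu => ?_) (fun u hu => ?_) <;> simp only [interior_Ioc] at hu ⊢
    · simpa using (hgD 0 (by norm_num) u hu).hasDerivWithinAt
    · exact hgD₀ 1 (by norm_num) u hu
  have hinv : ∀ x ∈ Ioi (1:ℝ), x⁻¹ ∈ Ioo 0 1 := fun x hx =>
    ⟨inv_pos.2 (zero_lt_one.trans hx), inv_lt_one_of_one_lt₀ hx⟩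
  have hFH : ∀ x, 1 ≤ x → F x = x⁻¹ * reflProfileDeriv g 0 x⁻¹ := fun x hx => by
    rw [hF x hx, reflProfileDeriv]; ring
  have hψ : EqOn F (fun x => x⁻¹ * reflProfileDeriv g 0 x⁻¹) (Ioi 1) := fun x hx =>
    hFH x hx.le
  have hφ : ∀ j < 4, ∀ x ∈ Ioi (1:ℝ),
      HasDerivAt (reflProfileDeriv g j) (reflProfileDeriv g (j + 1) x⁻¹) x⁻¹ := fun j hj x hx =>
    hasDerivAt_reflProfileDeriv hg₀ hmono (hg.continuousOn.mono Ioo_subset_Ioc_self) (hinv x hx)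
      fun i hi => hgD i (by omega) _ (hinv x hx)
  have hφ₀ : ∀ j ≤ 4, ∀ x ∈ Ioi (1:ℝ), 0 ≤ reflProfileDeriv g j x⁻¹ := fun j hj x hx =>
    reflProfileDeriv_nonneg hg₀ hmono (Ioo_subset_Ioc_self (hinv x hx))
      fun i hi => hgD₀ i (by omega) _ (hinv x hx)
  have hU₀ : Ioi (1:ℝ) ⊆ Ioi 0 := Ioi_subset_Ioi zero_le_one
  refine ⟨fun n hn x hx => ?_, fun x hx => ?_, fun n _ hn x hx => ?_⟩
  · exact differentiableAt_iteratedDeriv_inv_mul_comp_inv isOpen_Ioi hU₀ hψ hφ hn hx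
  · rw [hFH x hx]
    exact mul_nonneg (inv_nonneg.2 (zero_le_one.trans hx)) (reflProfileDeriv_zero_nonneg hg₀ hmono
      ⟨inv_pos.2 (zero_lt_one.trans_le hx), inv_le_one_of_one_le₀ hx⟩)
  · exact neg_one_pow_mul_iteratedDeriv_inv_mul_comp_inv_nonneg isOpen_Ioi hU₀ hψ hφ hφ₀ hn hx
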